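/- arXiv:0804.3208 — 3 statements merged into one kernel-verified Lean document; each statement's English description precedes it below -/
import Mathlib

section
/- For any arc γ = {ζ ∈ 𝕋 : |ζ - ζ'| ≤ t} with ζ' ∈ 𝕋 and 0 < t < 1, the harmonic measure ω(λ, γ, 𝔻) of γ at any point λ in the open unit disk with |λ - ζ'| = t is at least 1/6. -/
open Metric MeasureTheory Set

/-- The normalized Lebesgue (arc-length) measure on the unit circle `𝕋 ⊆ ℂ`. -/
noncomputable def circleMeasure : Measure ℂ :=
  (ENNReal.ofReal (2 * Real.pi)⁻¹) •
    (volume.restrict (Ioc (0:ℝ) (2 * Real.pi))).map (circleMap 0 1)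

/-- `ν_E(t)`, the normalized Lebesgue measure of the `t`-neighborhood
`E_t = {ζ ∈ 𝕋 : dist(ζ,E) < t}` of `E` on the circle. -/
noncomputable def nuE (E : Set ℂ) (t : ℝ) : ℝ :=
  (circleMeasure {ζ | ζ ∈ sphere (0:ℂ) 1 ∧ infDist ζ E < t}).toReal

/-- `I(α,E) = ∫₀² ν_E(s)/s^{α+1} ds`, as an extended nonnegative real. -/
noncomputable def IInt (α : ℝ) (E : Set ℂ) : ENNReal :=
  ∫⁻ s in Ioo (0:ℝ) 2, ENNReal.ofReal (nuE E s / s ^ (α + 1))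

/-!
Write `ζ' = e^{iφ}` and `λ = r e^{i(φ + δ)}` with `δ ∈ (-π, π]`. The arc contains
`{e^{iθ} : |θ - φ| ≤ β}` where `cos β = 1 - t²/2`, and `|λ - ζ'| = t` reads
`1 - 2 r cos δ + r² = 2 - 2 cos β`; as `t < 1`, this forces `β < π/2` and `|δ| < π/2`.
The Poisson kernel `(1 - r²)/(1 - 2 r cos θ + r²)` has the antiderivative
`2 arctan (K tan (θ/2))` with `K = (1 + r)/(1 - r)` on `(-π, π)`, so the harmonic measure is at
least `(arctan x + arctan y)/π` with `x = K tan ((β + δ)/2)`, `y = K tan ((β - δ)/2)`.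
By the tangent addition formula, `arctan x + arctan y ≥ π/6` follows from
`1 - x y ≤ √3 (x + y)`; clearing denominators and using the relation between `r`, `δ` and `β`,
this becomes `1 - cos β ≤ √3 sin β`, true for `0 ≤ β ≤ 2π/3`.
-/

open Real

theorem one_sub_cos_le_sqrt_three_mul_sin {β : ℝ} (h₀ : 0 ≤ β) (h : β ≤ 2 * π / 3) :
    1 - cos β ≤ √3 * sin β := by
  have hs : 0 ≤ sin (β / 2) := sin_nonneg_of_nonneg_of_le_pi (by linarith) (by linarith)
  have hsc : sin (β / 2) ≤ √3 * cos (β / 2) := by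
    have := sin_nonneg_of_nonneg_of_le_pi (x := π / 3 - β / 2) (by linarith) (by linarith)
    rw [sin_sub, sin_pi_div_three, cos_pi_div_three] at this
    linarith
  rw [show β = 2 * (β / 2) by ring, cos_two_mul', sin_two_mul, ← sin_sq_add_cos_sq (β / 2)]
  nlinarith

theorem pi_div_six_le_arctan_add_arctan {x y : ℝ} (hpos : 0 < x + y)
    (h : 1 - x * y ≤ √3 * (x + y)) : π / 6 ≤ arctan x + arctan y := by
  rcases lt_or_ge (x * y) 1 with hxy | hxy
  · rw [arctan_add hxy, ← arctan_inv_sqrt_three]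
    refine arctan_strictMono.monotone ?_
    rw [le_div_iff₀ (by linarith), inv_mul_eq_div, div_le_iff₀' (by positivity)]
    linarith
  · have hx : 0 < x := by nlinarith
    have : arctan x⁻¹ ≤ arctan y :=
      arctan_strictMono.monotone ((inv_le_iff_one_le_mul₀' hx).2 hxy)
    rw [arctan_inv_of_pos hx] at this
    linarith [pi_pos]

theorem pi_div_six_le_arctan_add_arctan_tan {r p q : ℝ} (hr : |r| < 1)
    (hp : |p| < π / 2) (hq : |q| < π / 2) (h₀ : 0 < p + q) (h : p + q ≤ 2 * π / 3)
    (hcon : 1 - 2 * r * cos (p - q) + r ^ 2 = 2 - 2 * cos (p + q)) :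
    π / 6 ≤ arctan ((1 + r) / (1 - r) * tan p) + arctan ((1 + r) / (1 - r) * tan q) := by
  obtain ⟨hr₁, hr₂⟩ := abs_lt.1 hr
  have hcp : 0 < cos p := cos_pos_of_mem_Ioo (abs_lt.1 hp)
  have hcq : 0 < cos q := cos_pos_of_mem_Ioo (abs_lt.1 hq)
  have hsin : 0 < sin (p + q) := sin_pos_of_pos_of_lt_pi h₀ (by linarith)
  have h1r : 0 < 1 - r := by linarith
  set K := (1 + r) / (1 - r)
  have hK : K * (1 - r) = 1 + r := div_mul_cancel₀ _ h1r.ne'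
  have hsum : (K * tan p + K * tan q) * (cos p * cos q) = K * sin (p + q) := by
    rw [tan_eq_sin_div_cos, tan_eq_sin_div_cos, sin_add]; field_simp
  have hprod : (1 - K * tan p * (K * tan q)) * (cos p * cos q) =
      cos p * cos q - K ^ 2 * (sin p * sin q) := by
    rw [tan_eq_sin_div_cos, tan_eq_sin_div_cos]; field_simp
  apply pi_div_six_le_arctan_add_arctan
  · have : 0 < (K * tan p + K * tan q) * (cos p * cos q) := by
      rw [hsum]; exact mul_pos (div_pos (by linarith) h1r) hsin
    exact pos_of_mul_pos_left this (mul_pos hcp hcq).le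
  · refine le_of_mul_le_mul_right ?_ (by positivity : 0 < cos p * cos q * (1 - r) ^ 2)
    calc (1 - K * tan p * (K * tan q)) * (cos p * cos q * (1 - r) ^ 2)
        = (1 - r ^ 2) * (1 - cos (p + q)) := by
          rw [cos_add, cos_sub] at hcon
          rw [← mul_assoc, hprod, cos_add]
          linear_combination hcon - sin p * sin q * (K * (1 - r) + 1 + r) * hK
      _ ≤ (1 - r ^ 2) * (√3 * sin (p + q)) := by
          gcongr
          · nlinarith
          · exact one_sub_cos_le_sqrt_three_mul_sin h₀.le h
      _ = √3 * (K * tan p + K * tan q) * (cos p * cos q * (1 - r) ^ 2) := by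
          rw [mul_assoc, ← mul_assoc (K * tan p + K * tan q), hsum]
          linear_combination (-(√3 * sin (p + q) * (1 - r))) * hK

noncomputable def circlePoissonKernel (r θ : ℝ) : ℝ :=
  (1 - r ^ 2) / (1 - 2 * r * cos θ + r ^ 2)

theorem circlePoissonKernel_denom_pos {r : ℝ} (hr : |r| < 1) (θ : ℝ) :
    0 < 1 - 2 * r * cos θ + r ^ 2 := by
  have : r * cos θ ≤ |r| := calc
    r * cos θ ≤ |r * cos θ| := le_abs_self _
    _ ≤ |r| := by rw [abs_mul]; exact mul_le_of_le_one_right (abs_nonneg r) (abs_cos_le_one θ)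
  nlinarith [sq_abs r, abs_nonneg r]

theorem continuous_circlePoissonKernel {r : ℝ} (hr : |r| < 1) :
    Continuous (circlePoissonKernel r) :=
  continuous_const.div (by fun_prop) fun θ => (circlePoissonKernel_denom_pos hr θ).ne'

theorem hasDerivAt_two_mul_arctan_tan_half {r θ : ℝ} (hr : |r| < 1) (hθ : cos (θ / 2) ≠ 0) :
    HasDerivAt (fun θ => 2 * arctan ((1 + r) / (1 - r) * tan (θ / 2)))
      (circlePoissonKernel r θ) θ := by
  have h1r : 1 - r ≠ 0 := by linarith [(abs_lt.1 hr).2]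
  have htan : HasDerivAt (fun θ => tan (θ / 2)) (1 / cos (θ / 2) ^ 2 * (1 / 2)) θ := by
    exact (hasDerivAt_tan hθ).comp θ ((hasDerivAt_id θ).div_const 2)
  refine (((htan.const_mul ((1 + r) / (1 - r))).arctan).const_mul 2).congr_deriv ?_
  have hcos : cos θ = 2 * cos (θ / 2) ^ 2 - 1 := by
    rw [← cos_two_mul, mul_div_cancel₀ _ two_ne_zero]
  have hden := circlePoissonKernel_denom_pos hr θ
  rw [hcos] at hden
  rw [circlePoissonKernel, hcos, tan_eq_sin_div_cos]
  field_simp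
  linear_combination (-(1 - r ^ 2) * (1 + r) ^ 2) * sin_sq_add_cos_sq (θ / 2)

theorem integral_circlePoissonKernel {r a b : ℝ} (hr : |r| < 1) (ha : a ∈ Ioo (-π) π)
    (hb : b ∈ Ioo (-π) π) :
    ∫ θ in a..b, circlePoissonKernel r θ =
      2 * arctan ((1 + r) / (1 - r) * tan (b / 2)) -
        2 * arctan ((1 + r) / (1 - r) * tan (a / 2)) := by
  refine intervalIntegral.integral_eq_sub_of_hasDerivAt
    (f := fun θ => 2 * arctan ((1 + r) / (1 - r) * tan (θ / 2))) (fun θ hθ => ?_)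
    ((continuous_circlePoissonKernel hr).intervalIntegrable a b)
  obtain ⟨hθ₁, hθ₂⟩ := ordConnected_Ioo.uIcc_subset ha hb hθ
  exact hasDerivAt_two_mul_arctan_tan_half hr (cos_pos_of_mem_Ioo ⟨by linarith, by linarith⟩).ne'

/-- `hcon` says `|r - e^{ic}| = |e^{iβ} - 1|`: the point `r` is as far from the midpoint of the
arc `[c - β, c + β]` as its endpoints are. -/
theorem pi_div_three_le_integral_circlePoissonKernel {r c β : ℝ} (hr : |r| < 1) (hβ₀ : 0 < β)
    (hβ : β ≤ 2 * π / 3) (hcβ : |c| + β < π)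
    (hcon : 1 - 2 * r * cos c + r ^ 2 = 2 - 2 * cos β) :
    π / 3 ≤ ∫ θ in (c - β)..(c + β), circlePoissonKernel r θ := by
  have hc₁ := le_abs_self c
  have hc₂ := neg_abs_le c
  have key := pi_div_six_le_arctan_add_arctan_tan (p := (c + β) / 2) (q := (β - c) / 2) hr
    (abs_lt.2 ⟨by linarith, by linarith⟩) (abs_lt.2 ⟨by linarith, by linarith⟩)
    (by linarith) (by linarith)
    (by rwa [show (c + β) / 2 - (β - c) / 2 = c by ring,
      show (c + β) / 2 + (β - c) / 2 = β by ring])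
  rw [integral_circlePoissonKernel hr ⟨by linarith, by linarith⟩ ⟨by linarith, by linarith⟩,
    show (c - β) / 2 = -((β - c) / 2) by ring,
    tan_neg, mul_neg, arctan_neg]
  linarith

theorem norm_circleMap_sub_circleMap_sq (r s θ φ : ℝ) :
    ‖circleMap 0 r θ - circleMap 0 s φ‖ ^ 2 = r ^ 2 - 2 * r * s * cos (θ - φ) + s ^ 2 := by
  rw [← Complex.normSq_eq_norm_sq, circleMap_zero, circleMap_zero, Complex.normSq_apply]
  simp only [Complex.sub_re, Complex.sub_im, Complex.re_ofReal_mul, Complex.im_ofReal_mul,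
    Complex.exp_ofReal_mul_I_re, Complex.exp_ofReal_mul_I_im, cos_sub]
  linear_combination r ^ 2 * sin_sq_add_cos_sq θ + s ^ 2 * sin_sq_add_cos_sq φ

theorem circlePoissonKernel_sub_eq (r θ ψ : ℝ) :
    circlePoissonKernel r (θ - ψ) = (1 - r ^ 2) / ‖circleMap 0 1 θ - circleMap 0 r ψ‖ ^ 2 := by
  rw [norm_circleMap_sub_circleMap_sq, circlePoissonKernel]
  ring_nf

theorem norm_circleMap_sub_circleMap_le {θ φ t : ℝ} (ht₀ : 0 ≤ t) (ht₂ : t ≤ 2)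
    (h : |θ - φ| ≤ arccos (1 - t ^ 2 / 2)) : ‖circleMap 0 1 θ - circleMap 0 1 φ‖ ≤ t := by
  refine (abs_le_of_sq_le_sq' ?_ ht₀).2
  have := cos_le_cos_of_nonneg_of_le_pi (abs_nonneg _) (arccos_le_pi _) h
  rw [cos_abs, cos_arccos (by nlinarith) (by nlinarith)] at this
  rw [norm_circleMap_sub_circleMap_sq]
  linarith

theorem circleMap_arg {ζ : ℂ} (hζ : ‖ζ‖ = 1) : circleMap 0 1 (Complex.arg ζ) = ζ := by
  simpa [circleMap_zero, hζ] using Complex.norm_mul_exp_arg_mul_I ζ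

theorem circleMap_arg_add_arg_div {ζ : ℂ} (hζ : ‖ζ‖ = 1) (w : ℂ) :
    circleMap 0 ‖w‖ (Complex.arg ζ + Complex.arg (w / ζ)) = w := by
  have hζ₀ : ζ ≠ 0 := norm_ne_zero_iff.1 (by rw [hζ]; exact one_ne_zero)
  calc circleMap 0 ‖w‖ (Complex.arg ζ + Complex.arg (w / ζ))
      = (‖w / ζ‖ * Complex.exp (Complex.arg (w / ζ) * Complex.I)) *
          (‖ζ‖ * Complex.exp (Complex.arg ζ * Complex.I)) := by
        rw [circleMap_zero, norm_div, hζ, div_one, Complex.ofReal_one, one_mul,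
          Complex.ofReal_add, add_mul, Complex.exp_add]
        ring
    _ = w := by rw [Complex.norm_mul_exp_arg_mul_I, Complex.norm_mul_exp_arg_mul_I,
          div_mul_cancel₀ w hζ₀]

theorem abs_lt_pi_div_two_of_cos_pos {δ : ℝ} (h₁ : -π < δ) (h₂ : δ ≤ π) (hcos : 0 < cos δ) :
    |δ| < π / 2 := by
  have := (Real.Angle.cos_pos_iff_abs_toReal_lt_pi_div_two (θ := δ)).1
    (by rwa [Real.Angle.cos_coe])
  rwa [Real.Angle.toReal_coe_eq_self_iff.2 ⟨h₁, h₂⟩] at this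

theorem exists_circleMap_eq_of_norm_sub_lt_one {ζ w : ℂ} (hζ : ‖ζ‖ = 1) (hw : ‖w - ζ‖ < 1) :
    ∃ φ δ, circleMap 0 1 φ = ζ ∧ circleMap 0 ‖w‖ (φ + δ) = w ∧ |δ| < π / 2 := by
  refine ⟨_, _, circleMap_arg hζ, circleMap_arg_add_arg_div hζ w,
    abs_lt_pi_div_two_of_cos_pos (Complex.neg_pi_lt_arg _) (Complex.arg_le_pi _) ?_⟩
  have hdist := norm_circleMap_sub_circleMap_sq ‖w‖ 1 (Complex.arg ζ + Complex.arg (w / ζ))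
    (Complex.arg ζ)
  rw [circleMap_arg_add_arg_div hζ w, circleMap_arg hζ, add_sub_cancel_left] at hdist
  nlinarith [norm_nonneg w, pow_lt_one₀ (norm_nonneg _) hw two_ne_zero]

theorem integral_circleMeasure {g : ℂ → ℝ} (hg : Measurable g) :
    ∫ ζ, g ζ ∂circleMeasure = (2 * π)⁻¹ * ∫ θ in 0..2 * π, g (circleMap 0 1 θ) := by
  rw [circleMeasure, integral_smul_measure,
    integral_map (measurable_circleMap 0 1).aemeasurable hg.aestronglyMeasurable,
    intervalIntegral.integral_of_le two_pi_pos.le, ENNReal.toReal_ofReal (by positivity),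
    smul_eq_mul]

theorem intervalIntegral_le_setIntegral_circleMeasure {S : Set ℂ} {f : ℂ → ℝ} {a b : ℝ}
    (hS : MeasurableSet S) (hf : Measurable f) (hfc : Continuous fun θ => f (circleMap 0 1 θ))
    (hf₀ : ∀ ζ ∈ S, 0 ≤ f ζ) (hab : a ≤ b) (hba : b ≤ a + 2 * π)
    (harc : ∀ θ ∈ Icc a b, circleMap 0 1 θ ∈ S) :
    (2 * π)⁻¹ * ∫ θ in a..b, f (circleMap 0 1 θ) ≤ ∫ ζ in S, f ζ ∂circleMeasure := by
  set g := fun θ => S.indicator f (circleMap 0 1 θ)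
  have hg₀ : ∀ θ, 0 ≤ g θ := fun θ => indicator_nonneg hf₀ _
  have hgi : IntervalIntegrable g volume a (a + 2 * π) := by
    rw [intervalIntegrable_iff_integrableOn_Icc_of_le (by linarith [pi_pos]),
      show g = (circleMap 0 1 ⁻¹' S).indicator fun θ => f (circleMap 0 1 θ) from
        funext fun θ => (indicator_comp_right (circleMap 0 1)).symm]
    exact hfc.integrableOn_Icc.indicator (hS.preimage (measurable_circleMap 0 1))
  rw [← integral_indicator hS, integral_circleMeasure (hf.indicator hS)]
  refine mul_le_mul_of_nonneg_left ?_ (by positivity)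
  calc ∫ θ in a..b, f (circleMap 0 1 θ) = ∫ θ in a..b, g θ :=
        intervalIntegral.integral_congr fun θ hθ =>
          (indicator_of_mem (harc θ (uIcc_of_le hab ▸ hθ)) f).symm
    _ ≤ ∫ θ in a..a + 2 * π, g θ :=
        intervalIntegral.integral_mono_interval le_rfl hab hba (ae_of_all _ hg₀) hgi
    _ = ∫ θ in 0..2 * π, g θ := by
        simpa using ((periodic_circleMap 0 1).comp (S.indicator f)).intervalIntegral_add_eq a 0

/-- For an arc `γ = {ζ ∈ 𝕋 : |ζ - ζ'| ≤ t}` with `ζ' ∈ 𝕋`, `0 < t < 1`, the harmonic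
measure `ω(λ,γ,𝔻)` (Poisson integral of the indicator of `γ`) at any `λ ∈ 𝔻` with
`|λ - ζ'| = t` is at least `1/6`. -/
theorem harmonic_measure_arc_ge (ζ' : ℂ) (hζ' : ζ' ∈ sphere (0:ℂ) 1)
    (t : ℝ) (ht0 : 0 < t) (ht1 : t < 1)
    (lam : ℂ) (hlam : lam ∈ ball (0:ℂ) 1) (hlamt : ‖lam - ζ'‖ = t) :
    (1:ℝ)/6 ≤ ∫ ζ in {ζ | ζ ∈ sphere (0:ℂ) 1 ∧ ‖ζ - ζ'‖ ≤ t},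
        (1 - ‖lam‖^2) / ‖ζ - lam‖^2 ∂circleMeasure := by
  set r := ‖lam‖
  have hr : |r| < 1 := by rw [abs_norm]; simpa using hlam
  obtain ⟨φ, δ, rfl, hlam_eq, hδ⟩ :=
    exists_circleMap_eq_of_norm_sub_lt_one (by simpa using hζ') (hlamt ▸ ht1)
  have hcon : 1 - 2 * r * cos δ + r ^ 2 = t ^ 2 := by
    rw [← hlamt, ← hlam_eq, norm_circleMap_sub_circleMap_sq, add_sub_cancel_left]
    ring
  set β := arccos (1 - t ^ 2 / 2)
  have hβ₀ : 0 < β := arccos_pos.2 (by nlinarith)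
  have hβ : β < π / 2 := arccos_lt_pi_div_two.2 (by nlinarith)
  have hkernel (θ : ℝ) :
      (1 - r ^ 2) / ‖circleMap 0 1 θ - lam‖ ^ 2 = circlePoissonKernel r (θ - (φ + δ)) := by
    rw [← hlam_eq, circlePoissonKernel_sub_eq]
  calc (1:ℝ) / 6 = (2 * π)⁻¹ * (π / 3) := by field_simp; ring
    _ ≤ (2 * π)⁻¹ * ∫ θ in (-δ - β)..(-δ + β), circlePoissonKernel r θ := by
        gcongr
        refine pi_div_three_le_integral_circlePoissonKernel hr hβ₀ (by linarith)
          (by rw [abs_neg]; linarith) ?_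
        rw [cos_neg, cos_arccos (by nlinarith) (by nlinarith)]
        linarith
    _ = (2 * π)⁻¹ * ∫ θ in (φ - β)..(φ + β), (1 - r ^ 2) / ‖circleMap 0 1 θ - lam‖ ^ 2 := by
        rw [intervalIntegral.integral_congr fun θ _ => hkernel θ,
          intervalIntegral.integral_comp_sub_right]
        ring_nf
    _ ≤ _ := intervalIntegral_le_setIntegral_circleMeasure
        (f := fun ζ => (1 - r ^ 2) / ‖ζ - lam‖ ^ 2)
        (isClosed_sphere.measurableSet.inter
          (measurableSet_le (f := fun ζ => ‖ζ - circleMap 0 1 φ‖) (by fun_prop) measurable_const))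
        (by fun_prop)
        (by simp_rw [hkernel]; exact (continuous_circlePoissonKernel hr).comp (by fun_prop))
        (fun ζ _ => div_nonneg (by nlinarith [abs_lt.1 hr]) (sq_nonneg _)) (by linarith)
        (by linarith) fun θ hθ => ⟨by simp, norm_circleMap_sub_circleMap_le ht0.le (by linarith)
          (abs_sub_le_iff.2 ⟨by linarith [hθ.2], by linarith [hθ.1]⟩)⟩
end

section
/- The entire-disk canonical product f(z) = ∏_{n≥1} P((1-z_n²)/(1-z_n z)) with P(z) = (1-z)e^z and z_n = 1 - 1/(n+1) converges locally uniformly on 𝔻 and satisfies log|f(z)| ≤ 96/|1-z| for all z ∈ 𝔻. -/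
/-!
Write `wₙ(z) = (1 - zₙ²)/(1 - zₙ z)` and `tₙ = 1 - zₙ = 1/(n+1)`. On the closed disk
`|1 - zₙ²| ≤ 2tₙ` and `|1 - zₙ z| ≥ (|1 - z| + tₙ)/3`, so `|wₙ(z)| ≤ 6/(|1 - z|(n+1) + 1)`.
Since `|P(u)| ≤ exp(|u|²/2)`, every partial product satisfies
`log|∏ P(wₙ)| ≤ 18 ∑ 1/(|1 - z|(n+1) + 1)² ≤ 18/|1 - z|`, the last sum telescoping.
On `|z| ≤ r < 1` the same bound gives `|wₙ| = O(1/n)`, so `|P(wₙ) - 1| ≤ 3|wₙ|²` is uniformly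
summable and the product converges locally uniformly.
-/

open Metric Filter Finset

noncomputable def weierstrassFactor (u : ℂ) : ℂ := (1 - u) * Complex.exp u

noncomputable def canonicalArg (a z : ℂ) : ℂ := (1 - a ^ 2) / (1 - a * z)

noncomputable def canonicalFactor (n : ℕ) (z : ℂ) : ℂ :=
  weierstrassFactor (canonicalArg (1 - 1 / (n + 1)) z)

theorem norm_weierstrassFactor_le (u : ℂ) : ‖weierstrassFactor u‖ ≤ Real.exp (‖u‖ ^ 2 / 2) := by
  have hsq : ‖1 - u‖ ^ 2 ≤ Real.exp (‖u‖ ^ 2 - 2 * u.re) := by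
    have h : ‖1 - u‖ ^ 2 = 1 - 2 * u.re + ‖u‖ ^ 2 := by
      simp only [← Complex.normSq_eq_norm_sq, Complex.normSq_apply, Complex.sub_re,
        Complex.sub_im, Complex.one_re, Complex.one_im]
      ring
    linarith [Real.add_one_le_exp (‖u‖ ^ 2 - 2 * u.re)]
  rw [← pow_le_pow_iff_left₀ (norm_nonneg _) (Real.exp_nonneg _) two_ne_zero,
    weierstrassFactor, norm_mul, Complex.norm_exp, mul_pow, ← Real.exp_nat_mul, ← Real.exp_nat_mul]
  calc ‖1 - u‖ ^ 2 * Real.exp (2 * u.re)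
      ≤ Real.exp (‖u‖ ^ 2 - 2 * u.re) * Real.exp (2 * u.re) := by gcongr
    _ = Real.exp (((2 : ℕ) : ℝ) * (‖u‖ ^ 2 / 2)) := by rw [← Real.exp_add]; push_cast; ring_nf

theorem norm_weierstrassFactor_sub_one_le {u : ℂ} (hu : ‖u‖ ≤ 1) :
    ‖weierstrassFactor u - 1‖ ≤ 3 * ‖u‖ ^ 2 := by
  have h1u : ‖1 - u‖ ≤ 2 := (norm_sub_le _ _).trans (by rw [norm_one]; linarith)
  calc ‖weierstrassFactor u - 1‖ = ‖(1 - u) * (Complex.exp u - 1 - u) - u ^ 2‖ := by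
        rw [weierstrassFactor]; ring_nf
    _ ≤ ‖1 - u‖ * ‖Complex.exp u - 1 - u‖ + ‖u‖ ^ 2 := by
        grw [norm_sub_le, norm_mul, norm_pow]
    _ ≤ 2 * ‖u‖ ^ 2 + ‖u‖ ^ 2 := by
        grw [h1u, Complex.norm_exp_sub_one_sub_id_le hu]
    _ = 3 * ‖u‖ ^ 2 := by ring

section RealParameter

variable {a : ℝ} {z : ℂ}

theorem norm_one_sub_sq_le (ha0 : 0 ≤ a) (ha1 : a ≤ 1) : ‖1 - (a : ℂ) ^ 2‖ ≤ 2 * (1 - a) := by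
  rw [← Complex.ofReal_pow, ← Complex.ofReal_one, ← Complex.ofReal_sub, Complex.norm_real,
    Real.norm_of_nonneg (by nlinarith)]
  nlinarith

theorem norm_one_sub_mul_ge (ha0 : 0 ≤ a) (ha1 : a ≤ 1) (hz : ‖z‖ ≤ 1) :
    (‖1 - z‖ + (1 - a)) / 3 ≤ ‖1 - a * z‖ := by
  have haz : ‖(a : ℂ) * z‖ ≤ a := by
    rw [norm_mul, Complex.norm_real, Real.norm_of_nonneg ha0]
    exact mul_le_of_le_one_right ha0 hz
  have h1 : 1 - a ≤ ‖1 - a * z‖ := by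
    have := norm_sub_norm_le (1 : ℂ) (a * z)
    rw [norm_one] at this
    linarith
  have h2 : ‖1 - z‖ ≤ ‖1 - a * z‖ + (1 - a) := by
    have h : 1 - z = (1 - a * z) - ((1 - a : ℝ) : ℂ) * z := by push_cast; ring
    have hz' : ‖((1 - a : ℝ) : ℂ) * z‖ ≤ 1 - a := by
      rw [norm_mul, Complex.norm_real, Real.norm_of_nonneg (by linarith)]
      exact mul_le_of_le_one_right (by linarith) hz
    rw [h]
    exact (norm_sub_le _ _).trans (by linarith)
  linarith

theorem norm_canonicalArg_le (ha0 : 0 ≤ a) (ha1 : a < 1) (hz : ‖z‖ ≤ 1) :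
    ‖canonicalArg a z‖ ≤ 6 * (1 - a) / (‖1 - z‖ + (1 - a)) := by
  have hpos : 0 < (‖1 - z‖ + (1 - a)) / 3 := by positivity
  rw [canonicalArg, norm_div]
  calc ‖1 - (a : ℂ) ^ 2‖ / ‖1 - a * z‖ ≤ 2 * (1 - a) / ((‖1 - z‖ + (1 - a)) / 3) :=
        div_le_div₀ (by linarith) (norm_one_sub_sq_le ha0 ha1.le) hpos
          (norm_one_sub_mul_ge ha0 ha1.le hz)
    _ = 6 * (1 - a) / (‖1 - z‖ + (1 - a)) := by field_simp; ring

end RealParameter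

section CanonicalFactor

variable {z : ℂ}

theorem one_sub_one_div_succ_eq_ofReal (n : ℕ) :
    (1 : ℂ) - 1 / (n + 1) = ((1 - 1 / (n + 1) : ℝ) : ℂ) := by
  push_cast; rfl

theorem one_sub_one_div_succ_mem_Ico (n : ℕ) : (1 - 1 / (n + 1) : ℝ) ∈ Set.Ico 0 1 :=
  ⟨by rw [sub_nonneg, div_le_one (by positivity)]; linarith,
    by simp only [sub_lt_self_iff]; positivity⟩

theorem norm_canonicalArg_nat_le (n : ℕ) (hz : ‖z‖ ≤ 1) :
    ‖canonicalArg (1 - 1 / (n + 1)) z‖ ≤ 6 / (‖1 - z‖ * (n + 1) + 1) := by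
  obtain ⟨ha0, ha1⟩ := one_sub_one_div_succ_mem_Ico n
  rw [one_sub_one_div_succ_eq_ofReal]
  refine (norm_canonicalArg_le ha0 ha1 hz).trans_eq ?_
  rw [sub_sub_cancel]
  field_simp

theorem continuousOn_canonicalFactor (n : ℕ) : ContinuousOn (canonicalFactor n) (ball 0 1) := by
  obtain ⟨ha0, ha1⟩ := one_sub_one_div_succ_mem_Ico n
  have hden : ∀ z ∈ ball (0 : ℂ) 1, 1 - (1 - 1 / (n + 1)) * z ≠ 0 := fun z hz => by
    rw [← norm_pos_iff, one_sub_one_div_succ_eq_ofReal]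
    refine lt_of_lt_of_le ?_ (norm_one_sub_mul_ge ha0 ha1.le (mem_ball_zero_iff.1 hz).le)
    have : 0 < 1 - (1 - 1 / ((n : ℝ) + 1)) := by linarith
    positivity
  unfold canonicalFactor weierstrassFactor canonicalArg
  fun_prop (disch := assumption)

theorem norm_canonicalFactor_le (n : ℕ) (hz : ‖z‖ ≤ 1) :
    ‖canonicalFactor n z‖ ≤ Real.exp (18 / (‖1 - z‖ * (n + 1) + 1) ^ 2) := by
  refine (norm_weierstrassFactor_le _).trans (Real.exp_le_exp.2 ?_)
  calc ‖canonicalArg (1 - 1 / (n + 1)) z‖ ^ 2 / 2 ≤ (6 / (‖1 - z‖ * (n + 1) + 1)) ^ 2 / 2 := by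
        gcongr; exact norm_canonicalArg_nat_le n hz
    _ = 18 / (‖1 - z‖ * (n + 1) + 1) ^ 2 := by rw [div_pow]; ring

theorem norm_canonicalFactor_sub_one_le {r : ℝ} (hr : r < 1) {n : ℕ} (hn : 6 ≤ (1 - r) * (n + 1))
    (hz : ‖z‖ ≤ r) : ‖canonicalFactor n z - 1‖ ≤ 108 / ((1 - r) * (n + 1)) ^ 2 := by
  have hδ : 1 - r ≤ ‖1 - z‖ := by
    linarith [norm_one (α := ℂ) ▸ norm_sub_norm_le (1 : ℂ) z]
  have hw : ‖canonicalArg (1 - 1 / (n + 1)) z‖ ≤ 6 / ((1 - r) * (n + 1)) := by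
    have h1r : 0 < 1 - r := by linarith
    refine (norm_canonicalArg_nat_le n (hz.trans hr.le)).trans
      (div_le_div_of_nonneg_left (by norm_num) (by positivity) ?_)
    nlinarith
  calc ‖canonicalFactor n z - 1‖ ≤ 3 * ‖canonicalArg (1 - 1 / (n + 1)) z‖ ^ 2 :=
        norm_weierstrassFactor_sub_one_le (hw.trans ((div_le_one (by positivity)).2 hn))
    _ ≤ 3 * (6 / ((1 - r) * (n + 1))) ^ 2 := by gcongr
    _ = 108 / ((1 - r) * (n + 1)) ^ 2 := by rw [div_pow]; ring

end CanonicalFactor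

theorem prod_Icc_one_eq_prod_range {M : Type*} [CommMonoid M] (f : ℕ → M) (N : ℕ) :
    ∏ n ∈ Icc 1 N, f n = ∏ n ∈ range N, f (n + 1) := by
  rw [← Finset.Ico_add_one_right_eq_Icc, prod_Ico_eq_prod_range, Nat.add_sub_cancel]
  simp only [add_comm]

theorem sum_range_one_div_sq_le {δ : ℝ} (hδ : 0 < δ) (N : ℕ) :
    ∑ n ∈ range N, 1 / (δ * (n + 2) + 1) ^ 2 ≤ 1 / δ := by
  set g : ℕ → ℝ := fun n => 1 / (δ * (δ * (n + 1) + 1))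
  have hterm : ∀ n : ℕ, 1 / (δ * (n + 2) + 1) ^ 2 ≤ g n - g (n + 1) := by
    intro n
    have hg : g n - g (n + 1) = 1 / ((δ * (n + 1) + 1) * (δ * (n + 2) + 1)) := by
      simp only [g]; push_cast; field_simp; ring
    rw [hg, sq]
    gcongr
    linarith
  calc ∑ n ∈ range N, 1 / (δ * (n + 2) + 1) ^ 2 ≤ ∑ n ∈ range N, (g n - g (n + 1)) :=
        sum_le_sum fun n _ => hterm n
    _ = g 0 - g N := sum_range_sub' g N
    _ ≤ 1 / δ := by
        simp only [g, CharP.cast_eq_zero, zero_add, mul_one]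
        have : 0 ≤ 1 / (δ * (δ * (N + 1) + 1)) := by positivity
        have : 1 / (δ * (δ + 1)) ≤ 1 / δ :=
          one_div_le_one_div_of_le hδ (le_mul_of_one_le_right hδ.le (by linarith))
        linarith

theorem norm_prod_canonicalFactor_le {z : ℂ} (hz : ‖z‖ < 1) (N : ℕ) :
    ‖∏ n ∈ Icc 1 N, canonicalFactor n z‖ ≤ Real.exp (18 / ‖1 - z‖) := by
  rw [prod_Icc_one_eq_prod_range]
  have hδ : 0 < ‖1 - z‖ := by
    linarith [norm_one (α := ℂ) ▸ norm_sub_norm_le (1 : ℂ) z]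
  calc ‖∏ n ∈ range N, canonicalFactor (n + 1) z‖
      = ∏ n ∈ range N, ‖canonicalFactor (n + 1) z‖ := norm_prod _ _
    _ ≤ ∏ n ∈ range N, Real.exp (18 / (‖1 - z‖ * ((n + 1 : ℕ) + 1) + 1) ^ 2) :=
        prod_le_prod (fun _ _ => norm_nonneg _) fun n _ => norm_canonicalFactor_le (n + 1) hz.le
    _ = Real.exp (18 * ∑ n ∈ range N, 1 / (‖1 - z‖ * (n + 2) + 1) ^ 2) := by
        rw [← Real.exp_sum, mul_sum]
        push_cast
        ring_nf
    _ ≤ Real.exp (18 / ‖1 - z‖) := by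
        rw [Real.exp_le_exp, div_eq_mul_one_div]
        gcongr
        exact sum_range_one_div_sq_le hδ N

-- The product is indexed from `n = 1`: `canonicalFactor 0` vanishes identically, as `z₀ = 0`.
theorem hasProdLocallyUniformlyOn_canonicalFactor :
    HasProdLocallyUniformlyOn (fun n => canonicalFactor (n + 1))
      (fun z => ∏' n, canonicalFactor (n + 1) z) (ball 0 1) := by
  refine hasProdLocallyUniformlyOn_of_forall_compact isOpen_ball fun K hK hKc => ?_
  obtain ⟨r, hr, hKr⟩ := exists_lt_subset_ball hKc.isClosed hK
  have h1r : 0 < 1 - r := by linarith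
  have hbound : ∀ᶠ n : ℕ in atTop, ∀ z ∈ K,
      ‖canonicalFactor (n + 1) z - 1‖ ≤ 108 / ((1 - r) * ((n + 1 : ℕ) + 1)) ^ 2 := by
    filter_upwards [eventually_ge_atTop ⌈6 / (1 - r)⌉₊] with n hn z hz
    refine norm_canonicalFactor_sub_one_le hr ?_ (mem_ball_zero_iff.1 (hKr hz)).le
    have := (div_le_iff₀' h1r).1 ((Nat.le_ceil _).trans (Nat.cast_le.2 hn))
    push_cast
    nlinarith
  have hsum : Summable fun n : ℕ => 108 / ((1 - r) * ((n + 1 : ℕ) + 1)) ^ 2 := by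
    have := ((summable_nat_add_iff 2).2 (Real.summable_one_div_nat_pow.2 one_lt_two)).mul_left
      (108 / (1 - r) ^ 2)
    refine this.congr fun n => ?_
    push_cast
    field_simp
    ring
  simpa only [add_sub_cancel] using Summable.hasProdUniformlyOn_nat_one_add hKc hsum hbound
    fun n => ((continuousOn_canonicalFactor (n + 1)).sub continuousOn_const).mono hK

theorem tendstoLocallyUniformlyOn_prod_canonicalFactor :
    TendstoLocallyUniformlyOn (fun N z => ∏ n ∈ Icc 1 N, canonicalFactor n z)
      (fun z => ∏' n, canonicalFactor (n + 1) z) atTop (ball 0 1) := by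
  simpa only [prod_Icc_one_eq_prod_range] using
    hasProdLocallyUniformlyOn_canonicalFactor.tendstoLocallyUniformlyOn_finsetRange

/-- The canonical product `f(z) = ∏ₙ P((1-zₙ²)/(1-zₙ z))` with `P(z) = (1-z)eᶻ` and
`zₙ = 1 - 1/(n+1)` converges locally uniformly on `𝔻` and satisfies
`log|f(z)| ≤ 96/|1-z|` on `𝔻`. -/
theorem canonical_product_growth :
    ∃ f : ℂ → ℂ,
      TendstoLocallyUniformlyOn
        (fun (N : ℕ) (z : ℂ) => ∏ n ∈ Finset.Icc 1 N,
          (1 - (1 - ((1:ℂ) - 1/(n+1))^2) / (1 - ((1:ℂ) - 1/(n+1)) * z)) *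
            Complex.exp ((1 - ((1:ℂ) - 1/(n+1))^2) / (1 - ((1:ℂ) - 1/(n+1)) * z)))
        f atTop (ball (0:ℂ) 1) ∧
      ∀ z ∈ ball (0:ℂ) 1,
        Real.log ‖f z‖ ≤ 96 / ‖1 - z‖ := by
  refine ⟨_, tendstoLocallyUniformlyOn_prod_canonicalFactor, fun z hz => ?_⟩
  have hz' : ‖z‖ < 1 := mem_ball_zero_iff.1 hz
  have hlim : ‖∏' n, canonicalFactor (n + 1) z‖ ≤ Real.exp (18 / ‖1 - z‖) :=
    le_of_tendsto (tendstoLocallyUniformlyOn_prod_canonicalFactor.tendsto_at hz).norm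
      (Eventually.of_forall fun N => norm_prod_canonicalFactor_le hz' N)
  calc Real.log ‖∏' n, canonicalFactor (n + 1) z‖ ≤ 18 / ‖1 - z‖ := by
        rcases (norm_nonneg (∏' n, canonicalFactor (n + 1) z)).eq_or_lt with h | h
        · rw [← h, Real.log_zero]; positivity
        · exact (Real.log_le_iff_le_exp h).2 hlim
    _ ≤ 96 / ‖1 - z‖ := by gcongr; norm_num
end

section
/- For z_n = 1 - 1/(n+1) and any z in the open unit disk, |(1-z_n²)/(1-z_n z)| ≤ 2√2/(n|1-z|+1). -/
/-!
Writing `zₙ = n/(n+1)` and `w = n(1-z) + 1`, the factor equals `(2n+1) / ((n+1) w)`, whose norm is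
at most `2/‖w‖`. Since `|z| < 1`, the vector `n(1-z)` lies in the closed right half-plane, i.e. makes
a non-obtuse angle with `1`, and for such vectors `‖u‖ + ‖v‖ ≤ √2 ‖u + v‖`.
-/

theorem norm_add_norm_le_sqrt_two_mul_norm_add {E : Type*} [SeminormedAddCommGroup E]
    [InnerProductSpace ℝ E] {u v : E} (huv : 0 ≤ inner ℝ u v) :
    ‖u‖ + ‖v‖ ≤ √2 * ‖u + v‖ := by
  have hsq : (‖u‖ + ‖v‖) ^ 2 ≤ 2 * ‖u + v‖ ^ 2 := by
    rw [norm_add_sq_real]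
    nlinarith [sq_nonneg (‖u‖ - ‖v‖)]
  calc ‖u‖ + ‖v‖ ≤ √(2 * ‖u + v‖ ^ 2) := (Real.le_sqrt (by positivity) (by positivity)).2 hsq
    _ = √2 * ‖u + v‖ := by rw [Real.sqrt_mul zero_le_two, Real.sqrt_sq (norm_nonneg _)]

theorem one_sub_one_sub_inv_sq_div {K : Type*} [Field K] {t : K} (ht : t + 1 ≠ 0) (z : K) :
    (1 - (1 - 1 / (t + 1)) ^ 2) / (1 - (1 - 1 / (t + 1)) * z) =
      (2 * t + 1) / ((t + 1) * (t * (1 - z) + 1)) := by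
  have hnum : 1 - (1 - 1 / (t + 1)) ^ 2 = (2 * t + 1) / (t + 1) ^ 2 := by
    field_simp
    ring
  have hden : 1 - (1 - 1 / (t + 1)) * z = (t * (1 - z) + 1) / (t + 1) := by
    field_simp
    ring
  rw [hnum, hden, div_div_div_eq,
    show (t + 1) ^ 2 * (t * (1 - z) + 1) = (t + 1) * (t * (1 - z) + 1) * (t + 1) by ring,
    mul_div_mul_right _ _ ht]

theorem norm_two_mul_add_one_div_add_one_le (n : ℕ) : ‖(2 * (n : ℂ) + 1) / (n + 1)‖ ≤ 2 := by
  have hreal : (2 * (n : ℂ) + 1) / (n + 1) = ((2 * n + 1 : ℝ) / (n + 1) : ℝ) := by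
    push_cast
    ring
  rw [hreal, Complex.norm_real, Real.norm_of_nonneg (by positivity), div_le_iff₀ (by positivity)]
  linarith

theorem abs_factor_bound_general (n : ℕ) (z : ℂ) (hz : z ∈ Metric.ball (0:ℂ) 1) :
    ‖(1 - ((1 : ℂ) - 1/(n+1))^2) / (1 - ((1 : ℂ) - 1/(n+1)) * z)‖ ≤
      2 * Real.sqrt 2 / (n * ‖1 - z‖ + 1) := by
  have hre : z.re < 1 := (Complex.re_le_norm z).trans_lt (mem_ball_zero_iff.1 hz)
  have hangle : 0 ≤ inner ℝ ((n : ℂ) * (1 - z)) 1 := by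
    simpa [Complex.inner] using mul_nonneg n.cast_nonneg (sub_nonneg.2 hre.le)
  have hw := norm_add_norm_le_sqrt_two_mul_norm_add hangle
  rw [norm_one, norm_mul, Complex.norm_natCast] at hw
  have hw0 : 0 < ‖(n : ℂ) * (1 - z) + 1‖ :=
    pos_of_mul_pos_right ((by positivity : (0 : ℝ) < n * ‖1 - z‖ + 1).trans_le hw)
      (Real.sqrt_nonneg 2)
  rw [one_sub_one_sub_inv_sq_div (Nat.cast_add_one_ne_zero n), ← div_div, norm_div]
  calc ‖(2 * (n : ℂ) + 1) / (n + 1)‖ / ‖(n : ℂ) * (1 - z) + 1‖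
      ≤ 2 / ‖(n : ℂ) * (1 - z) + 1‖ := by gcongr; exact norm_two_mul_add_one_div_add_one_le n
    _ ≤ 2 * √2 / (n * ‖1 - z‖ + 1) := by
      rw [div_le_div_iff₀ hw0 (by positivity)]
      linarith

/-- For `zₙ = 1 - 1/(n+1)` and any `z` in the open unit disk,
`|(1-zₙ²)/(1-zₙ z)| ≤ 2√2/(n|1-z|+1)`. -/
theorem abs_factor_bound (n : ℕ) (hn : 1 ≤ n) (z : ℂ) (hz : z ∈ Metric.ball (0:ℂ) 1) :
    ‖(1 - ((1 : ℂ) - 1/(n+1))^2) / (1 - ((1 : ℂ) - 1/(n+1)) * z)‖ ≤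
      2 * Real.sqrt 2 / (n * ‖1 - z‖ + 1) :=
  abs_factor_bound_general n z hz
end
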